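/- Let Λ be a strongly connected finite k-graph, suppose m, n ∈ ℕ^k satisfy m − n ∈ Per Λ, and let μ ∈ Λ^m. Set p := (m ∨ n) − m and q := (m ∨ n) − n (coordinatewise maximum). Then Λ^min(θ_{m,n}(μ), μ) = {(α, θ_{q,p}(α)) : α ∈ s(μ)Λ^q}. -/

import Mathlib

/-- A higher-rank graph (`k`-graph): a countable category with a degree functor
`d : Λ → ℕ^k` satisfying the unique factorisation property.  Morphisms are called
paths; the vertices are the paths of degree `0` (the identity morphisms).
`r` and `s` are the codomain (range) and domain (source) maps.  By convention
`Λ^{e_i} ≠ ∅` for each standard generator `e_i` of `ℕ^k`. -/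
structure KGraph (k : ℕ) where
  Path : Type
  countable : Countable Path
  d : Path → Fin k → ℕ
  r : Path → Path
  s : Path → Path
  d_r : ∀ lam, d (r lam) = 0
  d_s : ∀ lam, d (s lam) = 0
  r_vertex : ∀ v, d v = 0 → r v = v
  s_vertex : ∀ v, d v = 0 → s v = v
  comp : ∀ μ ν : Path, s μ = r ν → Path
  r_comp : ∀ μ ν h, r (comp μ ν h) = r μ
  s_comp : ∀ μ ν h, s (comp μ ν h) = s ν
  d_comp : ∀ μ ν h, d (comp μ ν h) = d μ + d ν
  id_comp : ∀ lam (h : s (r lam) = r lam), comp (r lam) lam h = lam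
  comp_id : ∀ lam (h : s lam = r (s lam)), comp lam (s lam) h = lam
  assoc : ∀ μ ν τ (h1 : s μ = r ν) (h2 : s ν = r τ)
      (h3 : s (comp μ ν h1) = r τ) (h4 : s μ = r (comp ν τ h2)),
      comp (comp μ ν h1) τ h3 = comp μ (comp ν τ h2) h4
  factor : ∀ (lam : Path) (m n : Fin k → ℕ), d lam = m + n →
      ∃! μν : Path × Path, ∃ h : s μν.1 = r μν.2,
        d μν.1 = m ∧ d μν.2 = n ∧ comp μν.1 μν.2 h = lam
  edge_nonempty : ∀ i : Fin k, ∃ lam, d lam = Pi.single i 1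

namespace KGraph

variable {k : ℕ}

/-- The vertices of a `k`-graph: the paths of degree `0`. -/
abbrev Vertex (Λ : KGraph k) : Type := {v : Λ.Path // Λ.d v = 0}

/-- A `k`-graph is finite if `Λ^n` is finite for every `n ∈ ℕ^k`. -/
def IsFinite (Λ : KGraph k) : Prop := ∀ n : Fin k → ℕ, {lam : Λ.Path | Λ.d lam = n}.Finite

/-- A `k`-graph is strongly connected if `vΛw ≠ ∅` for all vertices `v, w`. -/
def StronglyConnected (Λ : KGraph k) : Prop :=
  ∀ v w : Λ.Path, Λ.d v = 0 → Λ.d w = 0 → ∃ lam : Λ.Path, Λ.r lam = v ∧ Λ.s lam = w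

/-- `Λ^min(μ,ν) = {(α,β) : μα = νβ, d(μα) = d(μ) ∨ d(ν)}`. -/
def minSet (Λ : KGraph k) (μ ν : Λ.Path) : Set (Λ.Path × Λ.Path) :=
  {p | ∃ (h1 : Λ.s μ = Λ.r p.1) (h2 : Λ.s ν = Λ.r p.2),
      Λ.comp μ p.1 h1 = Λ.comp ν p.2 h2 ∧ Λ.d μ + Λ.d p.1 = Λ.d μ ⊔ Λ.d ν}

end KGraph

/-- An infinite path in a `k`-graph `Λ`: a degree-preserving functor `x : Ω_k → Λ`,
recorded by its values `x(m,n)` for `m ≤ n` in `ℕ^k`. -/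
structure InfinitePath {k : ℕ} (Λ : KGraph k) where
  toFun : ∀ m n : Fin k → ℕ, m ≤ n → Λ.Path
  d_eq : ∀ m n h, Λ.d (toFun m n h) = n - m
  src : ∀ m n h, Λ.s (toFun m n h) = toFun n n le_rfl
  rng : ∀ m n h, Λ.r (toFun m n h) = toFun m m le_rfl
  comp_eq : ∀ m n p (h1 : m ≤ n) (h2 : n ≤ p)
      (hc : Λ.s (toFun m n h1) = Λ.r (toFun n p h2)),
      Λ.comp (toFun m n h1) (toFun n p h2) hc = toFun m p (h1.trans h2)

namespace InfinitePath

variable {k : ℕ} {Λ : KGraph k}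

/-- The shift map `σ^n` on the infinite-path space, `σ^n(x)(p,q) = x(n+p, n+q)`. -/
def shift (x : InfinitePath Λ) (n : Fin k → ℕ) : InfinitePath Λ where
  toFun p q h := x.toFun (n + p) (n + q) (add_le_add (le_refl n) h)
  d_eq p q h := by
    rw [x.d_eq]
    funext i
    exact Nat.add_sub_add_left (n i) (q i) (p i)
  src p q h := x.src _ _ _
  rng p q h := x.rng _ _ _
  comp_eq p q t h1 h2 hc := x.comp_eq _ _ _ _ _ hc

/-- The range `r(x) = x(0,0)` of an infinite path. -/
def range (x : InfinitePath Λ) : Λ.Path := x.toFun 0 0 le_rfl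

end InfinitePath

/-- `ExtEq Λ lam y x` says that `y = lam · x`, i.e. `y(0, d(lam)) = lam` and
`σ^{d(lam)}(y) = x`.  (Such an extension is unique when it exists.) -/
def KGraph.ExtEq {k : ℕ} (Λ : KGraph k) (lam : Λ.Path) (y x : InfinitePath Λ) : Prop :=
  y.toFun 0 (Λ.d lam) zero_le = lam ∧ y.shift (Λ.d lam) = x

/-- `Λ.IsTheta m n μ ν` says that `μ ∈ Λ^m`, `ν ∈ Λ^n`, and `μx = νx` for every
infinite path `x ∈ Z(s(μ))`; i.e. `ν = θ_{m,n}(μ)`. -/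
def KGraph.IsTheta {k : ℕ} (Λ : KGraph k) (m n : Fin k → ℕ) (μ ν : Λ.Path) : Prop :=
  Λ.d μ = m ∧ Λ.d ν = n ∧
    ∀ x : InfinitePath Λ, x.range = Λ.s μ →
      ∃ y : InfinitePath Λ, Λ.ExtEq μ y x ∧ Λ.ExtEq ν y x

/-- The periodicity group `Per Λ = {m − n : σ^m(x) = σ^n(x) for all x ∈ Λ^∞} ⊆ ℤ^k`. -/
def KGraph.Per {k : ℕ} (Λ : KGraph k) : Set (Fin k → ℤ) :=
  {g | ∃ m n : Fin k → ℕ, (∀ i, (m i : ℤ) - n i = g i) ∧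
      ∀ x : InfinitePath Λ, x.shift m = x.shift n}

/-- `Λ` is aperiodic if every vertex `v` admits `x ∈ Z(v)` with
`σ^m(x) ≠ σ^n(x)` for all `m ≠ n` in `ℕ^k`. -/
def KGraph.Aperiodic {k : ℕ} (Λ : KGraph k) : Prop :=
  ∀ v : Λ.Path, Λ.d v = 0 → ∃ x : InfinitePath Λ, x.range = v ∧
    ∀ m n : Fin k → ℕ, m ≠ n → x.shift m ≠ x.shift n

/-!
For `y ∈ Z(s(μ))` the infinite paths `μ y` and `θ_{m,n}(μ) y` coincide, so comparing their
segments of degree `m ∨ n` gives `θ_{m,n}(μ) · y(0, q) = μ · y(0, p)`. Taking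
`y = α x = θ_{q,p}(α) x` shows that every pair `(α, θ_{q,p}(α))` lies in
`Λ^min(θ_{m,n}(μ), μ)`. Conversely, for `(α, β)` in that set and `y = α x`, unique
factorisation forces `y(0, p) = β`, and `σ^p(y) = σ^q(y) = x` because
`q - p = m - n ∈ Per Λ`. Strong connectivity supplies the infinite paths needed, and makes
every shift `σ^n` surjective, which is what lets periodicity be applied to `y`.
-/

namespace KGraph

variable {k : ℕ} {Λ : KGraph k}

lemma comp_congr {u u' w w' : Λ.Path} (h : Λ.s u = Λ.r w) (h' : Λ.s u' = Λ.r w')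
    (hu : u = u') (hw : w = w') : Λ.comp u w h = Λ.comp u' w' h' := by
  subst hu hw
  rfl

lemma comp_inj {u u' w w' : Λ.Path} (hc : Λ.s u = Λ.r w) (hc' : Λ.s u' = Λ.r w')
    (hd : Λ.d u = Λ.d u') (he : Λ.comp u w hc = Λ.comp u' w' hc') : u = u' ∧ w = w' := by
  have hdw : Λ.d w = Λ.d w' := by
    have h := congrArg Λ.d he
    rw [Λ.d_comp, Λ.d_comp, hd] at h
    exact add_left_cancel h
  have h := (Λ.factor _ (Λ.d u) (Λ.d w) (Λ.d_comp u w hc)).unique (y₁ := (u, w))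
    (y₂ := (u', w')) ⟨hc, rfl, rfl, rfl⟩ ⟨hc', hd.symm, hdw.symm, he.symm⟩
  exact Prod.ext_iff.mp h

lemma comp_of_d_eq_zero_left {v w : Λ.Path} (hv : Λ.d v = 0) (h : Λ.s v = Λ.r w) :
    Λ.comp v w h = w := by
  obtain rfl : v = Λ.r w := (Λ.s_vertex v hv).symm.trans h
  exact Λ.id_comp w h

lemma comp_of_d_eq_zero_right {u v : Λ.Path} (hv : Λ.d v = 0) (h : Λ.s u = Λ.r v) :
    Λ.comp u v h = u := by
  obtain rfl : v = Λ.s u := (Λ.r_vertex v hv).symm.trans h.symm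
  exact Λ.comp_id u h

def IsPrefix (u τ : Λ.Path) : Prop :=
  ∃ w, ∃ hc : Λ.s u = Λ.r w, Λ.comp u w hc = τ

lemma IsPrefix.refl (u : Λ.Path) : IsPrefix u u :=
  ⟨Λ.s u, (Λ.r_vertex _ (Λ.d_s u)).symm, Λ.comp_id u _⟩

lemma IsPrefix.trans {u v τ : Λ.Path} (huv : IsPrefix u v) (hvτ : IsPrefix v τ) :
    IsPrefix u τ := by
  obtain ⟨w₁, hc₁, rfl⟩ := huv
  obtain ⟨w₂, hc₂, rfl⟩ := hvτ
  have hc : Λ.s w₁ = Λ.r w₂ := (Λ.s_comp u w₁ hc₁).symm.trans hc₂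
  exact ⟨Λ.comp w₁ w₂ hc, hc₁.trans (Λ.r_comp _ _ _).symm, (Λ.assoc u w₁ w₂ hc₁ hc hc₂ _).symm⟩

lemma IsPrefix.comp_left {u τ : Λ.Path} (huτ : IsPrefix u τ) (w : Λ.Path)
    (hu : Λ.s w = Λ.r u) (hτ : Λ.s w = Λ.r τ) : IsPrefix (Λ.comp w u hu) (Λ.comp w τ hτ) := by
  obtain ⟨v, hc, rfl⟩ := huτ
  exact ⟨v, (Λ.s_comp w u hu).trans hc, Λ.assoc w u v hu hc _ hτ⟩

lemma IsPrefix.eq_of_d_eq {u u' τ : Λ.Path} (hu : IsPrefix u τ) (hu' : IsPrefix u' τ)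
    (hd : Λ.d u = Λ.d u') : u = u' := by
  obtain ⟨w, hc, rfl⟩ := hu
  obtain ⟨w', hc', he⟩ := hu'
  exact (comp_inj hc hc' hd he.symm).1

lemma exists_isPrefix {τ : Λ.Path} {a : Fin k → ℕ} (h : a ≤ Λ.d τ) :
    ∃ u, Λ.d u = a ∧ IsPrefix u τ := by
  obtain ⟨⟨u, w⟩, hc, hu, -, he⟩ :=
    (Λ.factor τ a (Λ.d τ - a) (add_tsub_cancel_of_le h).symm).exists
  exact ⟨u, hu, w, hc, he⟩

lemma IsPrefix.of_d_le {u v τ : Λ.Path} (hu : IsPrefix u τ) (hv : IsPrefix v τ)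
    (h : Λ.d u ≤ Λ.d v) : IsPrefix u v := by
  obtain ⟨g, hg, hgv⟩ := exists_isPrefix h
  rwa [(hgv.trans hv).eq_of_d_eq hu hg] at hgv

noncomputable def pfx (τ : Λ.Path) (a : Fin k → ℕ) (h : a ≤ Λ.d τ) : Λ.Path :=
  (exists_isPrefix h).choose

lemma d_pfx (τ : Λ.Path) (a : Fin k → ℕ) (h : a ≤ Λ.d τ) : Λ.d (pfx τ a h) = a :=
  (exists_isPrefix h).choose_spec.1

lemma pfx_isPrefix (τ : Λ.Path) (a : Fin k → ℕ) (h : a ≤ Λ.d τ) : IsPrefix (pfx τ a h) τ :=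
  (exists_isPrefix h).choose_spec.2

lemma IsPrefix.pfx_eq {u τ : Λ.Path} (hu : IsPrefix u τ) {a : Fin k → ℕ} (ha : Λ.d u = a)
    (h : a ≤ Λ.d τ) : pfx τ a h = u :=
  (pfx_isPrefix τ a h).eq_of_d_eq hu (by rw [d_pfx, ha])

lemma IsPrefix.pfx_isPrefix_pfx {τ τ' : Λ.Path} (hττ' : IsPrefix τ τ') {a b : Fin k → ℕ}
    (hab : a ≤ b) (ha : a ≤ Λ.d τ) (hb : b ≤ Λ.d τ') : IsPrefix (pfx τ a ha) (pfx τ' b hb) :=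
  ((pfx_isPrefix τ a ha).trans hττ').of_d_le (pfx_isPrefix τ' b hb) (by rwa [d_pfx, d_pfx])

end KGraph

namespace InfinitePath

variable {k : ℕ} {Λ : KGraph k}

lemma toFun_congr (x : InfinitePath Λ) {a b a' b' : Fin k → ℕ} (ha : a = a') (hb : b = b')
    (h : a ≤ b) (h' : a' ≤ b') : x.toFun a b h = x.toFun a' b' h' := by
  subst ha hb
  rfl

lemma s_toFun_eq_r_toFun (x : InfinitePath Λ) {a b c : Fin k → ℕ} (hab : a ≤ b) (hbc : b ≤ c) :
    Λ.s (x.toFun a b hab) = Λ.r (x.toFun b c hbc) := by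
  rw [x.src, x.rng]

lemma d_range (x : InfinitePath Λ) : Λ.d x.range = 0 :=
  (x.d_eq 0 0 le_rfl).trans (tsub_self _)

lemma isPrefix_toFun (x : InfinitePath Λ) {a b : Fin k → ℕ} (hab : a ≤ b) :
    KGraph.IsPrefix (x.toFun 0 a zero_le) (x.toFun 0 b zero_le) :=
  ⟨_, x.s_toFun_eq_r_toFun zero_le hab, x.comp_eq 0 a b zero_le hab _⟩

lemma ext_of_toFun_zero {x y : InfinitePath Λ}
    (h : ∀ b, x.toFun 0 b zero_le = y.toFun 0 b zero_le) : x = y := by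
  have htoFun : ∀ a b (hab : a ≤ b), x.toFun a b hab = y.toFun a b hab := by
    intro a b hab
    have he := (x.comp_eq 0 a b zero_le hab (x.s_toFun_eq_r_toFun _ _)).trans
      ((h b).trans (y.comp_eq 0 a b zero_le hab (y.s_toFun_eq_r_toFun _ _)).symm)
    exact (KGraph.comp_inj _ _ (by rw [x.d_eq, y.d_eq]) he).2
  cases x
  cases y
  congr
  funext a b hab
  exact htoFun a b hab

lemma shift_shift (x : InfinitePath Λ) (a b : Fin k → ℕ) :
    (x.shift a).shift b = x.shift (a + b) :=
  ext_of_toFun_zero fun c => x.toFun_congr (add_assoc a b 0).symm (add_assoc a b c).symm _ _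

end InfinitePath

namespace KGraph

variable {k : ℕ} {Λ : KGraph k}

section Tower

variable (f : (Fin k → ℕ) → Λ.Path) (hcoh : ∀ a b, a ≤ b → IsPrefix (f a) (f b))

noncomputable def towerStep (a b : Fin k → ℕ) (hab : a ≤ b) : Λ.Path :=
  (hcoh a b hab).choose

lemma towerStep_spec (a b : Fin k → ℕ) (hab : a ≤ b) :
    ∃ hc, Λ.comp (f a) (towerStep f hcoh a b hab) hc = f b :=
  (hcoh a b hab).choose_spec

lemma towerStep_self (a : Fin k → ℕ) : towerStep f hcoh a a le_rfl = Λ.s (f a) := by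
  obtain ⟨hc, he⟩ := towerStep_spec f hcoh a a le_rfl
  exact (comp_inj hc ((Λ.r_vertex _ (Λ.d_s _)).symm) rfl (he.trans (Λ.comp_id _ _).symm)).2

noncomputable def ofTower (hd : ∀ a, Λ.d (f a) = a) : InfinitePath Λ where
  toFun := towerStep f hcoh
  d_eq a b hab := by
    obtain ⟨hc, he⟩ := towerStep_spec f hcoh a b hab
    have h := congrArg Λ.d he
    rw [Λ.d_comp, hd, hd] at h
    exact eq_tsub_of_add_eq ((add_comm _ _).trans h)
  src a b hab := by
    obtain ⟨hc, he⟩ := towerStep_spec f hcoh a b hab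
    rw [towerStep_self, ← he, Λ.s_comp]
  rng a b hab := by
    obtain ⟨hc, -⟩ := towerStep_spec f hcoh a b hab
    rw [towerStep_self, hc]
  comp_eq a b c hab hbc hc := by
    obtain ⟨hc₁, he₁⟩ := towerStep_spec f hcoh a b hab
    obtain ⟨hc₂, he₂⟩ := towerStep_spec f hcoh b c hbc
    obtain ⟨hc₃, he₃⟩ := towerStep_spec f hcoh a c (hab.trans hbc)
    have h₄ : Λ.s (f a) = Λ.r (Λ.comp _ _ hc) := hc₁.trans (Λ.r_comp _ _ _).symm
    have he : Λ.comp (f a) (Λ.comp _ _ hc) h₄ = Λ.comp (f a) _ hc₃ :=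
      (Λ.assoc _ _ _ hc₁ hc ((Λ.s_comp _ _ _).trans hc) h₄).symm.trans
        ((comp_congr _ hc₂ he₁ rfl).trans (he₂.trans he₃.symm))
    exact (comp_inj h₄ hc₃ rfl he).2

lemma ofTower_toFun_zero (hd : ∀ a, Λ.d (f a) = a) (b : Fin k → ℕ) :
    (ofTower f hcoh hd).toFun 0 b zero_le = f b := by
  obtain ⟨hc, he⟩ := towerStep_spec f hcoh 0 b zero_le
  exact (comp_of_d_eq_zero_left (hd 0) hc).symm.trans he

end Tower

section Extend

variable {lam : Λ.Path} {x : InfinitePath Λ}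

lemma s_eq_r_toFun_zero (h : Λ.s lam = x.range) (c : Fin k → ℕ) :
    Λ.s lam = Λ.r (x.toFun 0 c zero_le) :=
  h.trans (x.rng 0 c zero_le).symm

lemma le_d_comp_toFun_zero (h : Λ.s lam = x.range) (a : Fin k → ℕ) :
    a ≤ Λ.d (Λ.comp lam (x.toFun 0 a zero_le) (s_eq_r_toFun_zero h a)) := by
  rw [Λ.d_comp, x.d_eq, tsub_zero]
  exact le_add_self

noncomputable def extendPath (lam : Λ.Path) (x : InfinitePath Λ) (h : Λ.s lam = x.range) :
    InfinitePath Λ :=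
  ofTower (fun a => pfx _ a (le_d_comp_toFun_zero h a))
    (fun _ _ hab => ((x.isPrefix_toFun hab).comp_left lam _ _).pfx_isPrefix_pfx hab _ _)
    (fun a => d_pfx _ a _)

lemma extEq_of_toFun_zero_add {y : InfinitePath Λ} (h : Λ.s lam = x.range)
    (hy : ∀ c, y.toFun 0 (Λ.d lam + c) zero_le =
      Λ.comp lam (x.toFun 0 c zero_le) (s_eq_r_toFun_zero h c)) : Λ.ExtEq lam y x := by
  have hlam : y.toFun 0 (Λ.d lam) zero_le = lam :=
    (y.toFun_congr rfl (add_zero _).symm _ _).trans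
      ((hy 0).trans (comp_of_d_eq_zero_right (by simp [x.d_eq]) _))
  refine ⟨hlam, InfinitePath.ext_of_toFun_zero fun c => ?_⟩
  have hseg : y.toFun (Λ.d lam) (Λ.d lam + c) le_self_add = x.toFun 0 c zero_le := by
    have he := y.comp_eq 0 (Λ.d lam) (Λ.d lam + c) zero_le le_self_add
      (y.s_toFun_eq_r_toFun _ _)
    rw [hy c] at he
    exact (comp_inj _ _ (congrArg Λ.d hlam) he).2
  exact (y.toFun_congr (add_zero _) rfl _ _).trans hseg

lemma extEq_extendPath (h : Λ.s lam = x.range) : Λ.ExtEq lam (extendPath lam x h) x := by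
  refine extEq_of_toFun_zero_add h fun c => ?_
  refine (ofTower_toFun_zero _ _ _ _).trans ?_
  have hpre := (x.isPrefix_toFun (le_add_self : c ≤ Λ.d lam + c)).comp_left lam
    (s_eq_r_toFun_zero h c) (s_eq_r_toFun_zero h _)
  exact hpre.pfx_eq (by rw [Λ.d_comp, x.d_eq, tsub_zero]) _

lemma ExtEq.range_eq_s {y : InfinitePath Λ} (hy : Λ.ExtEq lam y x) : x.range = Λ.s lam := by
  rw [← hy.2]
  refine (y.toFun_congr (add_zero _) (add_zero _) _ le_rfl).trans ?_
  rw [← y.src 0 _ zero_le, hy.1]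

lemma ExtEq.range_eq_r {y : InfinitePath Λ} (hy : Λ.ExtEq lam y x) : y.range = Λ.r lam := by
  rw [← hy.1, y.rng]
  rfl

lemma ExtEq.toFun_zero_add {y : InfinitePath Λ} (hy : Λ.ExtEq lam y x) (c : Fin k → ℕ) :
    y.toFun 0 (Λ.d lam + c) zero_le =
      Λ.comp lam (x.toFun 0 c zero_le) (s_eq_r_toFun_zero hy.range_eq_s.symm c) := by
  rw [← y.comp_eq 0 (Λ.d lam) (Λ.d lam + c) zero_le le_self_add (y.s_toFun_eq_r_toFun _ _)]
  refine comp_congr _ _ hy.1 ?_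
  rw [← hy.2]
  exact y.toFun_congr (add_zero _).symm rfl _ _

end Extend


lemma isPrefix_r (τ : Λ.Path) : IsPrefix (Λ.r τ) τ :=
  ⟨τ, Λ.s_vertex _ (Λ.d_r τ), Λ.id_comp τ _⟩

lemma exists_same_d_s_eq (hsc : Λ.StronglyConnected) (lam : Λ.Path) {v : Λ.Path}
    (hv : Λ.d v = 0) : ∃ τ, Λ.d τ = Λ.d lam ∧ Λ.s τ = v := by
  obtain ⟨g, hgr, hgs⟩ := hsc (Λ.s lam) v (Λ.d_s lam) hv
  obtain ⟨⟨u, τ⟩, hc, -, hτ, he⟩ := (Λ.factor (Λ.comp lam g hgr.symm) (Λ.d g) (Λ.d lam)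
    ((Λ.d_comp _ _ _).trans (add_comm _ _))).exists
  exact ⟨τ, hτ, by rw [← Λ.s_comp u τ hc, he, Λ.s_comp, hgs]⟩

lemma exists_same_d_r_eq (hsc : Λ.StronglyConnected) (lam : Λ.Path) {v : Λ.Path}
    (hv : Λ.d v = 0) : ∃ τ, Λ.d τ = Λ.d lam ∧ Λ.r τ = v := by
  obtain ⟨g, hgr, hgs⟩ := hsc v (Λ.r lam) hv (Λ.d_r lam)
  obtain ⟨⟨τ, u⟩, hc, hτ, -, he⟩ := (Λ.factor (Λ.comp g lam hgs) (Λ.d lam) (Λ.d g)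
    ((Λ.d_comp _ _ _).trans (add_comm _ _))).exists
  exact ⟨τ, hτ, by rw [← Λ.r_comp τ u hc, he, Λ.r_comp, hgr]⟩

lemma exists_d_eq_s_eq (hsc : Λ.StronglyConnected) (c : Fin k → ℕ) {v : Λ.Path}
    (hv : Λ.d v = 0) : ∃ τ, Λ.d τ = c ∧ Λ.s τ = v := by
  let S : AddSubmonoid (Fin k → ℕ) :=
    { carrier := {c | ∃ lam, Λ.d lam = c}
      zero_mem' := ⟨v, hv⟩
      add_mem' := by
        rintro _ _ ⟨lam₁, rfl⟩ ⟨lam₂, rfl⟩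
        obtain ⟨τ, hτ, hr⟩ := exists_same_d_r_eq hsc lam₂ (Λ.d_s lam₁)
        exact ⟨Λ.comp lam₁ τ hr.symm, by rw [Λ.d_comp, hτ]⟩ }
  have hc : c ∈ S := by
    rw [← Finset.univ_sum_single c]
    refine S.sum_mem fun i _ => ?_
    rw [← mul_one (c i), ← smul_eq_mul, Pi.single_smul]
    exact S.nsmul_mem (Λ.edge_nonempty i) _
  obtain ⟨lam, rfl⟩ := hc
  exact exists_same_d_s_eq hsc lam hv

lemma exists_d_eq_r_eq (hsc : Λ.StronglyConnected) (c : Fin k → ℕ) {v : Λ.Path}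
    (hv : Λ.d v = 0) : ∃ τ, Λ.d τ = c ∧ Λ.r τ = v := by
  obtain ⟨lam, rfl, -⟩ := exists_d_eq_s_eq hsc c hv
  exact exists_same_d_r_eq hsc lam hv

/-- The path is glued from paths of degree `(1, …, 1)` placed end to end. -/
lemma exists_range_eq (hsc : Λ.StronglyConnected) {v : Λ.Path} (hv : Λ.d v = 0) :
    ∃ x : InfinitePath Λ, x.range = v := by
  choose step hstep_d hstep_r using fun u : Λ.Path =>
    exists_d_eq_r_eq hsc (fun _ => 1) (Λ.d_s u)
  let B : ℕ → Λ.Path := fun j => Nat.rec v (fun _ u => Λ.comp u (step u) (hstep_r u).symm) j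
  have hB_d : ∀ j, Λ.d (B j) = fun _ => j := by
    intro j
    induction j with
    | zero => exact hv
    | succ j ih =>
      change Λ.d (Λ.comp (B j) _ _) = _
      rw [Λ.d_comp, ih, hstep_d]
      rfl
  have hB_r : ∀ j, Λ.r (B j) = v := by
    intro j
    induction j with
    | zero => exact Λ.r_vertex v hv
    | succ j ih => exact (Λ.r_comp _ _ _).trans ih
  have hB_mono : ∀ i j, i ≤ j → IsPrefix (B i) (B j) := by
    intro i j hij
    induction j, hij using Nat.le_induction with
    | base => exact IsPrefix.refl _
    | succ j _ ih => exact ih.trans ⟨_, _, rfl⟩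
  have hle : ∀ a : Fin k → ℕ, a ≤ Λ.d (B (∑ i, a i)) := fun a i => by
    rw [hB_d]
    exact Finset.single_le_sum (fun _ _ => Nat.zero_le _) (Finset.mem_univ i)
  refine ⟨ofTower (fun a => pfx (B (∑ i, a i)) a (hle a))
    (fun a b hab => (hB_mono _ _ (Finset.sum_le_sum fun i _ => hab i)).pfx_isPrefix_pfx hab _ _)
    (fun a => d_pfx _ a _), ?_⟩
  exact (ofTower_toFun_zero _ _ _ 0).trans (((isPrefix_r _).pfx_eq (Λ.d_r _) _).trans (hB_r _))

lemma exists_shift_eq (hsc : Λ.StronglyConnected) (n : Fin k → ℕ) (y : InfinitePath Λ) :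
    ∃ w : InfinitePath Λ, w.shift n = y := by
  obtain ⟨τ, rfl, hτ⟩ := exists_d_eq_s_eq hsc n y.d_range
  exact ⟨extendPath τ y hτ, (extEq_extendPath hτ).2⟩

/-- Membership `g ∈ Per Λ` is witnessed by one pair `g = m - n`; surjectivity of `σ^n`
transfers the periodicity to every other pair `g = a - b`. -/
lemma shift_eq_shift_of_mem_per (hsc : Λ.StronglyConnected) {g : Fin k → ℤ} (hg : g ∈ Λ.Per)
    {a b : Fin k → ℕ} (hab : ∀ i, (a i : ℤ) - b i = g i) (y : InfinitePath Λ) :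
    y.shift a = y.shift b := by
  obtain ⟨m, n, hmn, hper⟩ := hg
  obtain ⟨w, rfl⟩ := exists_shift_eq hsc n y
  have hsum : n + a = m + b := funext fun i => by
    have := hmn i
    have := hab i
    simp only [Pi.add_apply]
    omega
  rw [w.shift_shift, w.shift_shift, hsum, ← w.shift_shift, hper, w.shift_shift]

section Theta

variable {m n : Fin k → ℕ} {μ ν : Λ.Path}

lemma IsTheta.s_eq (hsc : Λ.StronglyConnected) (hθ : Λ.IsTheta m n μ ν) : Λ.s ν = Λ.s μ := by
  obtain ⟨x, hx⟩ := exists_range_eq hsc (Λ.d_s μ)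
  obtain ⟨y, -, hyν⟩ := hθ.2.2 x hx
  exact hyν.range_eq_s.symm.trans hx

lemma IsTheta.comp_eq_comp (hθ : Λ.IsTheta m n μ ν) {y : InfinitePath Λ}
    (hy : y.range = Λ.s μ) {α β : Λ.Path} (hα : y.toFun 0 ((m ⊔ n) - n) zero_le = α)
    (hβ : y.toFun 0 ((m ⊔ n) - m) zero_le = β) (h₁ : Λ.s ν = Λ.r α) (h₂ : Λ.s μ = Λ.r β) :
    Λ.comp ν α h₁ = Λ.comp μ β h₂ := by
  obtain ⟨hμ, hν, hext⟩ := hθ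
  obtain ⟨z, hzμ, hzν⟩ := hext y hy
  subst hα hβ
  calc Λ.comp ν (y.toFun 0 ((m ⊔ n) - n) zero_le) h₁
      = z.toFun 0 (Λ.d ν + ((m ⊔ n) - n)) zero_le := (hzν.toFun_zero_add _).symm
    _ = z.toFun 0 (Λ.d μ + ((m ⊔ n) - m)) zero_le := by
      refine z.toFun_congr rfl ?_ _ _
      rw [hμ, hν, add_tsub_cancel_of_le le_sup_right, add_tsub_cancel_of_le le_sup_left]
    _ = Λ.comp μ (y.toFun 0 ((m ⊔ n) - m) zero_le) h₂ := hzμ.toFun_zero_add _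

lemma IsTheta.d_eq_of_mem_minSet (hθ : Λ.IsTheta m n μ ν) {α β : Λ.Path}
    (h : (α, β) ∈ Λ.minSet ν μ) : Λ.d α = (m ⊔ n) - n ∧ Λ.d β = (m ⊔ n) - m := by
  obtain ⟨hμ, hν, -⟩ := hθ
  obtain ⟨h₁, h₂, he, hd⟩ := h
  have hdβ := congrArg Λ.d he
  rw [Λ.d_comp, Λ.d_comp, hd, hμ, hν, sup_comm] at hdβ
  rw [hμ, hν, sup_comm] at hd
  exact ⟨eq_tsub_of_add_eq ((add_comm _ _).trans hd),
    eq_tsub_of_add_eq ((add_comm _ _).trans hdβ.symm)⟩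

lemma IsTheta.mem_minSet (hsc : Λ.StronglyConnected) (hθ : Λ.IsTheta m n μ ν) {α β : Λ.Path}
    (hα : Λ.r α = Λ.s μ) (hαβ : Λ.IsTheta ((m ⊔ n) - n) ((m ⊔ n) - m) α β) :
    (α, β) ∈ Λ.minSet ν μ := by
  obtain ⟨hdα, hdβ, hext⟩ := hαβ
  obtain ⟨x, hx⟩ := exists_range_eq hsc (Λ.d_s α)
  obtain ⟨y, hyα, hyβ⟩ := hext x hx
  have h₁ : Λ.s ν = Λ.r α := (hθ.s_eq hsc).trans hα.symm
  have h₂ : Λ.s μ = Λ.r β := hα.symm.trans (hyα.range_eq_r.symm.trans hyβ.range_eq_r)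
  refine ⟨h₁, h₂, hθ.comp_eq_comp (hyα.range_eq_r.trans hα)
    ((y.toFun_congr rfl hdα.symm _ _).trans hyα.1)
    ((y.toFun_congr rfl hdβ.symm _ _).trans hyβ.1) h₁ h₂, ?_⟩
  rw [hθ.2.1, hθ.1, hdα, add_tsub_cancel_of_le le_sup_right, sup_comm]

lemma IsTheta.isTheta_of_mem_minSet (hsc : Λ.StronglyConnected) (hθ : Λ.IsTheta m n μ ν)
    (hper : (fun i => (m i : ℤ) - n i) ∈ Λ.Per) {α β : Λ.Path} (h : (α, β) ∈ Λ.minSet ν μ) :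
    Λ.IsTheta ((m ⊔ n) - n) ((m ⊔ n) - m) α β := by
  obtain ⟨hdα, hdβ⟩ := hθ.d_eq_of_mem_minSet h
  obtain ⟨h₁, h₂, he, -⟩ := h
  refine ⟨hdα, hdβ, fun x hx => ?_⟩
  have hyα := extEq_extendPath hx.symm
  set y := extendPath α x hx.symm
  have hy : y.range = Λ.s μ := hyα.range_eq_r.trans (h₁.symm.trans (hθ.s_eq hsc))
  have hα : y.toFun 0 ((m ⊔ n) - n) zero_le = α :=
    (y.toFun_congr rfl hdα.symm _ _).trans hyα.1
  have hβ : y.toFun 0 ((m ⊔ n) - m) zero_le = β := by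
    have h₂' : Λ.s μ = Λ.r (y.toFun 0 ((m ⊔ n) - m) zero_le) := hy.symm.trans (y.rng _ _ _).symm
    exact (comp_inj h₂' h₂ rfl ((hθ.comp_eq_comp hy hα rfl h₁ h₂').symm.trans he)).2
  refine ⟨y, hyα, (y.toFun_congr rfl hdβ _ _).trans hβ, ?_⟩
  rw [← hyα.2]
  refine (shift_eq_shift_of_mem_per hsc hper (fun i => ?_) y).symm
  rw [hdα, hdβ]
  simp only [Pi.sub_apply, Pi.sup_apply]
  omega

end Theta

end KGraph

theorem minSet_theta_general {k : ℕ} (Λ : KGraph k)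
    (hsc : Λ.StronglyConnected)
    (m n : Fin k → ℕ) (hmn : (fun i => (m i : ℤ) - n i) ∈ Λ.Per)
    (μ : Λ.Path) :
    ∀ ν : Λ.Path, Λ.IsTheta m n μ ν →
      Λ.minSet ν μ =
        {pr : Λ.Path × Λ.Path | Λ.d pr.1 = (m ⊔ n) - n ∧ Λ.r pr.1 = Λ.s μ ∧
          Λ.IsTheta ((m ⊔ n) - n) ((m ⊔ n) - m) pr.1 pr.2} := by
  intro ν hθ
  ext ⟨α, β⟩
  constructor
  · intro h
    have hαβ := hθ.isTheta_of_mem_minSet hsc hmn h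
    exact ⟨hαβ.1, h.1.symm.trans (hθ.s_eq hsc), hαβ⟩
  · rintro ⟨-, hα, hαβ⟩
    exact hθ.mem_minSet hsc hα hαβ

/-- For `m − n ∈ Per Λ` and `μ ∈ Λ^m`, with `p := (m ∨ n) − m` and `q := (m ∨ n) − n`:
`Λ^min(θ_{m,n}(μ), μ) = {(α, θ_{q,p}(α)) : α ∈ s(μ)Λ^q}`. -/
theorem minSet_theta {k : ℕ} (Λ : KGraph k)
    (hfin : Λ.IsFinite) (hsc : Λ.StronglyConnected)
    (m n : Fin k → ℕ) (hmn : (fun i => (m i : ℤ) - n i) ∈ Λ.Per)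
    (μ : Λ.Path) (hμ : Λ.d μ = m) :
    ∀ ν : Λ.Path, Λ.IsTheta m n μ ν →
      Λ.minSet ν μ =
        {pr : Λ.Path × Λ.Path | Λ.d pr.1 = (m ⊔ n) - n ∧ Λ.r pr.1 = Λ.s μ ∧
          Λ.IsTheta ((m ⊔ n) - n) ((m ⊔ n) - m) pr.1 pr.2} :=
  minSet_theta_general Λ hsc m n hmn μ
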